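/- arXiv:1505.00062 — 4 statements merged into one kernel-verified Lean document; each statement's English description precedes it below -/
import Mathlib

section
/- Let K ≥ 1 be an integer, let S ⊆ T be finite nonempty sets of points in the half-open interval [0,1) (representing node positions on the unit circle), and let h : Fin K → [0,1) be the K key hashes. For a finite nonempty set A ⊆ [0,1) and a point u ∈ [0,1), let dist_A(u) = min_{t ∈ A} fract(t − u) denote the minimal forward distance from u to A, and let succ_A(u) denote the unique element t of A attaining this minimum. Define the multi-probe assignment assign_A(h) = succ_A(h_{j*}) where j* is an index minimizing j ↦ dist_A(h_j). Suppose j* is the strict (unique) minimizer of j ↦ dist_T(h_j), i.e. dist_T(h_j) > dist_T(h_{j*}) for all j ≠ j*. If assign_T(h) ∈ S, then j* is also the strict minimizer of j ↦ dist_S(h_j) and assign_S(h) = assign_T(h). (Monotonicity of multi-probe consistent hashing: removing nodes other than the assigned node does not change the assignment.) -/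
/-! Removing nodes can only increase each probe's distance to the node set, while the distance of
the winning probe `h j⋆` is unchanged, because its successor `a` survives. Hence `j⋆` still wins
strictly; and the successor is unique because `t ↦ fract (t - u)` is injective on `[0,1)`. -/

/-- The forward distance on the unit circle from `u` to `t`, for `u, t ∈ [0,1)`:
`t - u` if `t ≥ u`, and `t - u + 1` otherwise. -/
noncomputable def fwdDist (u t : ℝ) : ℝ := Int.fract (t - u)

/-- The minimal forward distance from a point `u` to a finite nonempty set `A`. -/
noncomputable def distToSet (A : Finset ℝ) (u : ℝ) : ℝ :=
  sInf ((fun t => fwdDist u t) '' (A : Set ℝ))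

lemma distToSet_eq_fwdDist_of_forall_le {A : Finset ℝ} {u a : ℝ} (ha : a ∈ A)
    (hmin : ∀ t ∈ A, fwdDist u a ≤ fwdDist u t) : distToSet A u = fwdDist u a :=
  IsLeast.csInf_eq ⟨⟨a, ha, rfl⟩, by rintro _ ⟨t, ht, rfl⟩; exact hmin t ht⟩

lemma distToSet_anti {S T : Finset ℝ} (hST : S ⊆ T) (hS : S.Nonempty) (u : ℝ) :
    distToSet T u ≤ distToSet S u :=
  csInf_le_csInf (T.finite_toSet.image _).bddBelow ((Finset.coe_nonempty.mpr hS).image _)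
    (Set.image_mono (Finset.coe_subset.mpr hST))

lemma fwdDist_injOn (u : ℝ) : Set.InjOn (fwdDist u) (Set.Ico 0 1) := by
  intro t ht t' ht' heq
  obtain ⟨z, hz⟩ := Int.fract_eq_fract.mp heq
  have hz_lt : (z : ℝ) < 1 := by linarith [ht.2, ht'.1]
  have hz_gt : (-1 : ℝ) < z := by linarith [ht.1, ht'.2]
  have hz0 : z = 0 := by
    have : z < 1 := by exact_mod_cast hz_lt
    have : -1 < z := by exact_mod_cast hz_gt
    omega
  rw [hz0, Int.cast_zero] at hz
  linarith

theorem multiprobe_consistent_hash_monotone_general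
    (K : ℕ)
    (S T : Finset ℝ) (hST : S ⊆ T)
    (hT01 : ∀ t ∈ T, t ∈ Set.Ico (0 : ℝ) 1)
    (h : Fin K → ℝ)
    (jstar : Fin K)
    (hjstar : ∀ j : Fin K, j ≠ jstar → distToSet T (h jstar) < distToSet T (h j))
    (a : ℝ) (haT : a ∈ T)
    (hamin : ∀ t ∈ T, fwdDist (h jstar) a ≤ fwdDist (h jstar) t)
    (haS : a ∈ S) :
    (∀ j : Fin K, j ≠ jstar → distToSet S (h jstar) < distToSet S (h j)) ∧
      ∀ b ∈ S, (∀ t ∈ S, fwdDist (h jstar) b ≤ fwdDist (h jstar) t) → b = a := by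
  have hdT : distToSet T (h jstar) = fwdDist (h jstar) a :=
    distToSet_eq_fwdDist_of_forall_le haT hamin
  have hdS : distToSet S (h jstar) = fwdDist (h jstar) a :=
    distToSet_eq_fwdDist_of_forall_le haS fun t ht => hamin t (hST ht)
  refine ⟨fun j hj => ?_, fun b hbS hbmin => ?_⟩
  · calc distToSet S (h jstar) = distToSet T (h jstar) := hdS.trans hdT.symm
      _ < distToSet T (h j) := hjstar j hj
      _ ≤ distToSet S (h j) := distToSet_anti hST ⟨a, haS⟩ (h j)
  · exact fwdDist_injOn (h jstar) (hT01 b (hST hbS)) (hT01 a haT)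
      (le_antisymm (hbmin a haS) (hamin b (hST hbS)))

/-- Monotonicity of multi-probe consistent hashing: let `S ⊆ T` be finite nonempty
sets of node positions in `[0,1)` and let `h : Fin K → [0,1)` be the `K ≥ 1` key
hashes.  Suppose `j⋆` is the strict minimizer of `j ↦ distToSet T (h j)`, and `a`
is the successor in `T` of `h j⋆` (the element of `T` minimizing the forward
distance from `h j⋆`), so that `a = assign_T h`.  If `a ∈ S`, then `j⋆` is also
the strict minimizer of `j ↦ distToSet S (h j)`, and any successor in `S` of
`h j⋆` equals `a`, i.e. `assign_S h = assign_T h`. -/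
theorem multiprobe_consistent_hash_monotone
    (K : ℕ) (hK : 1 ≤ K)
    (S T : Finset ℝ) (hST : S ⊆ T) (hS : S.Nonempty)
    (hT01 : ∀ t ∈ T, t ∈ Set.Ico (0 : ℝ) 1)
    (h : Fin K → ℝ) (hh : ∀ j, h j ∈ Set.Ico (0 : ℝ) 1)
    (jstar : Fin K)
    (hjstar : ∀ j : Fin K, j ≠ jstar → distToSet T (h jstar) < distToSet T (h j))
    (a : ℝ) (haT : a ∈ T)
    (hamin : ∀ t ∈ T, fwdDist (h jstar) a ≤ fwdDist (h jstar) t)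
    (haS : a ∈ S) :
    (∀ j : Fin K, j ≠ jstar → distToSet S (h jstar) < distToSet S (h j)) ∧
      ∀ b ∈ S, (∀ t ∈ S, fwdDist (h jstar) b ≤ fwdDist (h jstar) t) → b = a :=
  multiprobe_consistent_hash_monotone_general K S T hST hT01 h jstar hjstar a haT hamin haS
end

section
/- Let K ≥ 2 and n ≥ 1 be integers, let b ≥ 0, and let x, x' : Fin n → ℝ be families of nonnegative reals that agree in every coordinate except the k-th, with x_k ≤ b and x'_k ≤ b. Define G(t) = Σ_{i=1}^n max(x_i − t, 0) and G'(t) = Σ_{i=1}^n max(x'_i − t, 0) for t ∈ [0,1]. Then |K∫_0^1 G(t)^{K−1} dt − K∫_0^1 G'(t)^{K−1} dt| ≤ K(K−1) · b · ∫_0^1 (max(G(t), G'(t)))^{K−2} dt. (The bounded-differences constant c_k for the peak-load functional Z_K.) -/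
/-!
The map `t ↦ G t` sums the positive parts `max (x i - t) 0`, so changing one spacing inside `[0, b]`
moves `G t` by at most `b`, for every `t`. The mean value bound
`|a ^ m - c ^ m| ≤ m · |a - c| · max a c ^ (m - 1)` for `a, c ≥ 0` then bounds the integrands
pointwise, and integrating over `[0, 1]` gives the estimate.
-/

open Finset intervalIntegral

theorem Fintype.sum_sub_sum_eq_sub_of_eq_of_ne {ι M : Type*} [Fintype ι] [AddCommGroup M]
    {f g : ι → M} {k : ι} (h : ∀ i, i ≠ k → f i = g i) :
    ∑ i, f i - ∑ i, g i = f k - g k := by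
  rw [← Finset.sum_sub_distrib]
  exact Fintype.sum_eq_single k fun i hi => sub_eq_zero.mpr (h i hi)

theorem abs_max_sub_zero_sub_max_sub_zero_le {a c b : ℝ} (ha : 0 ≤ a) (hab : a ≤ b)
    (hc : 0 ≤ c) (hcb : c ≤ b) (t : ℝ) :
    |max (a - t) 0 - max (c - t) 0| ≤ b :=
  calc |max (a - t) 0 - max (c - t) 0| ≤ |(a - t) - (c - t)| := abs_max_sub_max_le_abs _ _ _
    _ = |a - c| := by rw [sub_sub_sub_cancel_right]
    _ ≤ b := abs_sub_le_of_nonneg_of_le ha hab hc hcb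

theorem abs_pow_sub_pow_le_of_nonneg {a c : ℝ} (ha : 0 ≤ a) (hc : 0 ≤ c) (m : ℕ) :
    |a ^ m - c ^ m| ≤ m * |a - c| * max a c ^ (m - 1) := by
  simpa only [abs_of_nonneg ha, abs_of_nonneg hc, mul_comm |a - c|] using
    abs_pow_sub_pow_le a c m

theorem abs_integral_pow_sub_integral_pow_le {f g : ℝ → ℝ} (hf : Continuous f)
    (hg : Continuous g) (hf₀ : ∀ t, 0 ≤ f t) (hg₀ : ∀ t, 0 ≤ g t) {b : ℝ}
    (hfg : ∀ t, |f t - g t| ≤ b) (m : ℕ) {u v : ℝ} (huv : u ≤ v) :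
    |(∫ t in u..v, f t ^ m) - ∫ t in u..v, g t ^ m| ≤
      m * b * ∫ t in u..v, max (f t) (g t) ^ (m - 1) := by
  have hpointwise : ∀ t, |f t ^ m - g t ^ m| ≤ m * b * max (f t) (g t) ^ (m - 1) := fun t =>
    (abs_pow_sub_pow_le_of_nonneg (hf₀ t) (hg₀ t) m).trans <|
      mul_le_mul_of_nonneg_right (mul_le_mul_of_nonneg_left (hfg t) m.cast_nonneg)
        (pow_nonneg ((hf₀ t).trans (le_max_left _ _)) _)
  have hfm : Continuous fun t => f t ^ m := hf.pow m
  have hgm : Continuous fun t => g t ^ m := hg.pow m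
  rw [← integral_sub (hfm.intervalIntegrable u v) (hgm.intervalIntegrable u v),
    ← integral_const_mul]
  have hbound : Continuous fun t => m * b * max (f t) (g t) ^ (m - 1) := by fun_prop
  exact norm_integral_le_of_norm_le (f := fun t => f t ^ m - g t ^ m) huv
    (.of_forall fun t _ => hpointwise t) (hbound.intervalIntegrable u v)

section excessLoad

variable {ι : Type*} [Fintype ι]

noncomputable def excessLoad (x : ι → ℝ) (t : ℝ) : ℝ :=
  ∑ i, max (x i - t) 0

theorem continuous_excessLoad (x : ι → ℝ) : Continuous (excessLoad x) :=
  continuous_finsetSum _ fun _ _ => (continuous_const.sub continuous_id).max continuous_const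

theorem excessLoad_nonneg (x : ι → ℝ) (t : ℝ) : 0 ≤ excessLoad x t :=
  Finset.sum_nonneg fun _ _ => le_max_right _ _

theorem abs_excessLoad_sub_excessLoad_le {x x' : ι → ℝ} {k : ι} {b : ℝ}
    (hagree : ∀ i, i ≠ k → x i = x' i) (hxk₀ : 0 ≤ x k) (hxk : x k ≤ b)
    (hx'k₀ : 0 ≤ x' k) (hx'k : x' k ≤ b) (t : ℝ) :
    |excessLoad x t - excessLoad x' t| ≤ b := by
  rw [excessLoad, excessLoad,
    Fintype.sum_sub_sum_eq_sub_of_eq_of_ne (g := fun i => max (x' i - t) 0)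
      fun i hi => by rw [hagree i hi]]
  exact abs_max_sub_zero_sub_max_sub_zero_le hxk₀ hxk hx'k₀ hx'k t

end excessLoad

theorem peak_load_bounded_difference_general
    (K n : ℕ) (hK : 2 ≤ K)
    (b : ℝ)
    (x x' : Fin n → ℝ) (hx : ∀ i, 0 ≤ x i) (hx' : ∀ i, 0 ≤ x' i)
    (k : Fin n) (hagree : ∀ i, i ≠ k → x i = x' i)
    (hxk : x k ≤ b) (hx'k : x' k ≤ b) :
    |(K : ℝ) * (∫ t in (0 : ℝ)..1, (∑ i, max (x i - t) 0) ^ (K - 1)) -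
        (K : ℝ) * (∫ t in (0 : ℝ)..1, (∑ i, max (x' i - t) 0) ^ (K - 1))| ≤
      (K : ℝ) * ((K : ℝ) - 1) * b *
        ∫ t in (0 : ℝ)..1,
          (max (∑ i, max (x i - t) 0) (∑ i, max (x' i - t) 0)) ^ (K - 2) := by
  have hbound := abs_integral_pow_sub_integral_pow_le (continuous_excessLoad x)
    (continuous_excessLoad x') (excessLoad_nonneg x) (excessLoad_nonneg x')
    (abs_excessLoad_sub_excessLoad_le hagree (hx k) hxk (hx' k) hx'k) (K - 1) zero_le_one
  rw [Nat.cast_sub (by omega), Nat.cast_one, Nat.sub_sub] at hbound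
  rw [← mul_sub, abs_mul, Nat.abs_cast, mul_assoc _ _ b, mul_assoc]
  exact mul_le_mul_of_nonneg_left hbound K.cast_nonneg

/-- Bounded-differences estimate for the peak-load functional `Z_K`.
If the nonnegative spacing families `x` and `x'` agree except in the `k`-th
coordinate, where both `x k ≤ b` and `x' k ≤ b`, then with
`G t = Σ i, max (x i − t) 0` and `G' t = Σ i, max (x' i − t) 0`,
`|K∫₀¹ G^{K−1} − K∫₀¹ G'^{K−1}| ≤ K(K−1)·b·∫₀¹ (max G G')^{K−2}`. -/
theorem peak_load_bounded_difference
    (K n : ℕ) (hK : 2 ≤ K) (hn : 1 ≤ n)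
    (b : ℝ) (hb : 0 ≤ b)
    (x x' : Fin n → ℝ) (hx : ∀ i, 0 ≤ x i) (hx' : ∀ i, 0 ≤ x' i)
    (k : Fin n) (hagree : ∀ i, i ≠ k → x i = x' i)
    (hxk : x k ≤ b) (hx'k : x' k ≤ b) :
    |(K : ℝ) * (∫ t in (0 : ℝ)..1, (∑ i, max (x i - t) 0) ^ (K - 1)) -
        (K : ℝ) * (∫ t in (0 : ℝ)..1, (∑ i, max (x' i - t) 0) ^ (K - 1))| ≤
      (K : ℝ) * ((K : ℝ) - 1) * b *
        ∫ t in (0 : ℝ)..1,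
          (max (∑ i, max (x i - t) 0) (∑ i, max (x' i - t) 0)) ^ (K - 2) :=
  peak_load_bounded_difference_general K n hK b x x' hx hx' k hagree hxk hx'k
end

section
/- Let S ⊆ [0,1) be a finite set with at least two elements, and for h ∈ [0,1) let succ_S(h) denote the unique element t of S minimizing the forward distance fract(t − h) over t ∈ S. Then for every t ∈ S, the Lebesgue measure of the set {h ∈ [0,1) : succ_S(h) = t} equals min_{s ∈ S, s ≠ t} fract(t − s). (A uniformly hashed key is assigned to node t with probability equal to the length of the arc from t's predecessor to t.) -/
/-!
Since `t - h = (t - s) + (s - h)`, the fractional parts satisfy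
`fract (t - h) = fract (t - s) + fract (s - h) + z` with `z ∈ {-1, 0}`; hence, for `s ≢ t`,
`t` beats `s` for the key `h` exactly when `fract (t - h) < fract (t - s)`. So the keys assigned
to `t` are those with `fract (t - h) < D`, `D` the distance from the predecessor of `t`. This
condition is `1`-periodic in `h`, so its measure on `[0, 1)` equals its measure on the period
interval `(t - 1, t]`, where it cuts out `(t - D, t]`.
-/

open MeasureTheory

section FloorRing

variable {R : Type*} [Field R] [LinearOrder R] [IsStrictOrderedRing R] [FloorRing R]

theorem Int.fract_sub_le_fract_sub_iff {s t h : R} (hts : Int.fract (t - s) ≠ 0) :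
    Int.fract (t - h) ≤ Int.fract (s - h) ↔ Int.fract (t - h) < Int.fract (t - s) := by
  obtain ⟨z, hz⟩ := Int.fract_add (t - s) (s - h)
  rw [sub_add_sub_cancel] at hz
  have := (Int.fract_nonneg (t - s)).lt_of_ne' hts
  have := Int.fract_lt_one (t - s)
  have := Int.fract_nonneg (t - h); have := Int.fract_lt_one (t - h)
  have := Int.fract_nonneg (s - h); have := Int.fract_lt_one (s - h)
  have hz_gt : (-2 : ℤ) < z := by exact_mod_cast (by linarith : (-2 : R) < z)
  have hz_lt : z < 1 := by exact_mod_cast (by linarith : (z : R) < 1)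
  obtain rfl | rfl : z = -1 ∨ z = 0 := by omega
  all_goals push_cast at hz; constructor <;> intro <;> linarith

theorem Int.fract_sub_ne_zero_of_mem_Ico {s t : R} (hs : s ∈ Set.Ico (0 : R) 1)
    (ht : t ∈ Set.Ico (0 : R) 1) (hst : s ≠ t) : Int.fract (t - s) ≠ 0 := by
  intro h0
  obtain ⟨z, hz⟩ := Int.fract_eq_zero_iff.1 h0
  apply hst
  rw [← Int.fract_eq_self.2 hs, ← Int.fract_eq_self.2 ht]
  exact Int.fract_eq_fract.2 ⟨-z, by push_cast; linarith⟩

theorem forall_fract_sub_le_iff_lt_inf' {S : Finset R} {t : R} (hne : (S.erase t).Nonempty)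
    (hS : ∀ s ∈ S.erase t, Int.fract (t - s) ≠ 0) (h : R) :
    (∀ s ∈ S, Int.fract (t - h) ≤ Int.fract (s - h)) ↔
      Int.fract (t - h) < (S.erase t).inf' hne fun s => Int.fract (t - s) := by
  rw [Finset.lt_inf'_iff]
  constructor
  · intro hle s hs
    exact (Int.fract_sub_le_fract_sub_iff (hS s hs)).1 (hle s (Finset.mem_of_mem_erase hs))
  · intro hlt s hs
    rcases eq_or_ne s t with rfl | hst
    · exact le_rfl
    · have hs' : s ∈ S.erase t := Finset.mem_erase.2 ⟨hst, hs⟩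
      exact (Int.fract_sub_le_fract_sub_iff (hS s hs')).2 (hlt s hs')

end FloorRing

theorem volume_Ico_inter_fract_sub_lt (a t : ℝ) {D : ℝ} (hD : D ≤ 1) :
    volume {h : ℝ | h ∈ Set.Ico a (a + 1) ∧ Int.fract (t - h) < D} = ENNReal.ofReal D := by
  set A := {h : ℝ | Int.fract (t - h) < D}
  have hA : MeasurableSet A :=
    measurableSet_lt (measurable_fract.comp (measurable_const.sub measurable_id))
      measurable_const
  have hA_periodic : ∀ g : AddSubgroup.zmultiples (1 : ℝ), (g +ᵥ ·) ⁻¹' A = A := by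
    rintro ⟨_, n, rfl⟩
    ext h
    simp [A, sub_add_eq_sub_sub, sub_right_comm t]
  have hA_Ioc : A ∩ Set.Ioc (t - 1) (t - 1 + 1) = Set.Ioc (t - D) t := by
    ext h
    simp only [A, Set.mem_inter_iff, Set.mem_ofPred_eq, Set.mem_Ioc, sub_add_cancel]
    constructor
    · rintro ⟨hfract, hth, hht⟩
      rw [Int.fract_eq_self.2 ⟨sub_nonneg.2 hht, by linarith⟩] at hfract
      exact ⟨by linarith, hht⟩
    · rintro ⟨hDh, hht⟩
      rw [Int.fract_eq_self.2 ⟨sub_nonneg.2 hht, by linarith⟩]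
      exact ⟨by linarith, by linarith, hht⟩
  calc volume {h : ℝ | h ∈ Set.Ico a (a + 1) ∧ Int.fract (t - h) < D}
      = volume (A ∩ Set.Ioc a (a + 1)) := by
        rw [Set.ofPred_and, Set.inter_comm]
        exact measure_congr ((ae_eq_refl A).inter Ico_ae_eq_Ioc)
    _ = volume (A ∩ Set.Ioc (t - 1) (t - 1 + 1)) :=
        (isAddFundamentalDomain_Ioc one_pos a).measure_set_eq
          (isAddFundamentalDomain_Ioc one_pos (t - 1)) hA hA_periodic
    _ = ENNReal.ofReal D := by rw [hA_Ioc, Real.volume_Ioc, sub_sub_cancel]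

/-- Load of a node under ring consistent hashing: for a finite set `S ⊆ [0,1)` of
at least two node positions and `t ∈ S`, the Lebesgue measure of the set of key
hashes `h ∈ [0,1)` whose successor in `S` is `t` (i.e. `t` minimizes the forward
distance `Int.fract (· - h)` over `S`) equals the minimal forward distance
`Int.fract (t − s)` from the other nodes `s ∈ S` to `t`. -/
theorem measure_succ_eq_arc_length
    (S : Finset ℝ) (hS01 : ∀ s ∈ S, s ∈ Set.Ico (0 : ℝ) 1) (hcard : 2 ≤ S.card)
    (t : ℝ) (ht : t ∈ S) :
    volume {h : ℝ | h ∈ Set.Ico (0 : ℝ) 1 ∧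
        ∀ s ∈ S, Int.fract (t - h) ≤ Int.fract (s - h)} =
      ENNReal.ofReal
        ((S.erase t).inf' (by
            rw [← Finset.card_pos, Finset.card_erase_of_mem ht]; omega)
          fun s => Int.fract (t - s)) := by
  have hne : (S.erase t).Nonempty := by
    rw [← Finset.card_pos, Finset.card_erase_of_mem ht]; omega
  have hS : ∀ s ∈ S.erase t, Int.fract (t - s) ≠ 0 := fun s hs =>
    Int.fract_sub_ne_zero_of_mem_Ico (hS01 s (Finset.mem_of_mem_erase hs)) (hS01 t ht)
      (Finset.ne_of_mem_erase hs)
  have hD : (S.erase t).inf' hne (fun s => Int.fract (t - s)) ≤ 1 :=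
    hne.elim fun s hs => (Finset.inf'_le _ hs).trans (Int.fract_lt_one _).le
  simpa only [zero_add, ← forall_fract_sub_le_iff_lt_inf' hne hS]
    using volume_Ico_inter_fract_sub_lt 0 t hD
end

section
/- Let J ≥ 1 be a natural number, μ > 0, and t ≥ J/μ. Then the Gamma distribution with shape parameter J and rate μ assigns to the interval [t, ∞) a measure at most exp(−(μt − J − J·ln(μt/J))). (Chernoff upper bound for the load of a node hashed J ways: the sum of J independent exponential spacings of rate μ exceeds t with probability at most e^{−I(t)} where I(t) = μt − J − J ln(μt/J).) -/
/-!
Exponential tilting: for `0 < ν ≤ μ` the Gamma(`a`, `μ`) density equals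
`(μ/ν)^a e^{-(μ-ν)x}` times the Gamma(`a`, `ν`) density, and on `[t, ∞)` the tilt factor is
at most `(μ/ν)^a e^{-(μ-ν)t}`. Since Gamma(`a`, `ν`) is a probability measure, this constant
bounds the tail at `t`; the choice `ν = a/t` (which lies in `(0, μ]` exactly when `t ≥ a/μ`)
turns it into `exp(-(μt - a - a log(μt/a)))`.
-/

open MeasureTheory ProbabilityTheory Real Set

namespace ProbabilityTheory

lemma gammaPDFReal_eq_mul_gammaPDFReal {a μ ν : ℝ} (hμ : 0 ≤ μ) (hν : 0 < ν) (x : ℝ) :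
    gammaPDFReal a μ x = (μ / ν) ^ a * exp (-((μ - ν) * x)) * gammaPDFReal a ν x := by
  unfold gammaPDFReal
  split_ifs
  · have hexp : exp (-(μ * x)) = exp (-((μ - ν) * x)) * exp (-(ν * x)) := by
      rw [← exp_add]; ring_nf
    rw [div_rpow hμ hν.le, hexp]
    field_simp
  · simp

lemma gammaPDF_le_mul_gammaPDF {a μ ν t x : ℝ} (ha : 0 < a) (hν : 0 < ν) (hνμ : ν ≤ μ)
    (hx : t ≤ x) :
    gammaPDF a μ x ≤ ENNReal.ofReal ((μ / ν) ^ a * exp (-((μ - ν) * t))) * gammaPDF a ν x := by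
  have hμ : 0 ≤ μ := hν.le.trans hνμ
  have hpdf := gammaPDFReal_nonneg ha hν x
  rw [gammaPDF, gammaPDF, ← ENNReal.ofReal_mul (by positivity),
    gammaPDFReal_eq_mul_gammaPDFReal hμ hν]
  gcongr

theorem gammaMeasure_Ici_le {a μ ν : ℝ} (ha : 0 < a) (hν : 0 < ν) (hνμ : ν ≤ μ) (t : ℝ) :
    gammaMeasure a μ (Ici t) ≤ ENNReal.ofReal ((μ / ν) ^ a * exp (-((μ - ν) * t))) := by
  have hprob := isProbabilityMeasure_gammaMeasure ha hν
  set C := ENNReal.ofReal ((μ / ν) ^ a * exp (-((μ - ν) * t)))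
  calc gammaMeasure a μ (Ici t) = ∫⁻ x in Ici t, gammaPDF a μ x :=
        withDensity_apply _ measurableSet_Ici
    _ ≤ ∫⁻ x in Ici t, C * gammaPDF a ν x :=
        setLIntegral_mono' measurableSet_Ici fun _ hx ↦ gammaPDF_le_mul_gammaPDF ha hν hνμ hx
    _ = C * gammaMeasure a ν (Ici t) := by
        have hpdf : Measurable (gammaPDF a ν) := (measurable_gammaPDFReal a ν).ennreal_ofReal
        rw [lintegral_const_mul C hpdf, gammaMeasure, withDensity_apply _ measurableSet_Ici]
    _ ≤ C := mul_le_of_le_one_right' prob_le_one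

theorem gammaMeasure_Ici_le_exp {a μ t : ℝ} (ha : 0 < a) (hμ : 0 < μ) (ht : a / μ ≤ t) :
    gammaMeasure a μ (Ici t) ≤ ENNReal.ofReal (exp (-(μ * t - a - a * log (μ * t / a)))) := by
  have ht0 : 0 < t := (div_pos ha hμ).trans_le ht
  have hνμ : a / t ≤ μ := by
    rw [div_le_iff₀ ht0]; rw [div_le_iff₀ hμ] at ht; linarith
  have hconst : (μ / (a / t)) ^ a * exp (-((μ - a / t) * t)) =
      exp (-(μ * t - a - a * log (μ * t / a))) := by
    have hratio : μ / (a / t) = μ * t / a := by field_simp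
    rw [hratio, rpow_def_of_pos (by positivity), ← exp_add]
    congr 1
    field_simp
    ring
  simpa only [hconst] using gammaMeasure_Ici_le ha (div_pos ha ht0) hνμ t

end ProbabilityTheory

/-- Chernoff upper tail bound for the Gamma distribution with shape `J` and rate
`μ` (the law of the sum of `J` independent exponential spacings of rate `μ`):
for `t ≥ J/μ`, the probability of `[t, ∞)` is at most
`exp(−(μ·t − J − J·ln(μ·t/J)))`. -/
theorem gamma_chernoff_tail_bound
    (J : ℕ) (hJ : 1 ≤ J) (mu : ℝ) (hmu : 0 < mu)
    (t : ℝ) (ht : (J : ℝ) / mu ≤ t) :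
    gammaMeasure (J : ℝ) mu (Set.Ici t) ≤
      ENNReal.ofReal
        (Real.exp (-(mu * t - (J : ℝ) - (J : ℝ) * Real.log (mu * t / (J : ℝ))))) :=
  gammaMeasure_Ici_le_exp (Nat.cast_pos.mpr hJ) hmu ht
end
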